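/- Fix integers n ≥ 2 and s with 0 ≤ s ≤ n−2 and n − s even, and set c = s(s+2). Then there exist positive integers q_0, q_1, …, q_{(n+s)/2} such that the vector a := Σ_{j=0}^{(n+s)/2} q_j · (v_j ⊗ w_{(n+s+2)/2 − j}) in the tensor product model M satisfies H(a) = (−s−2)·a, (Ω − c)²(a) = 0, and (Ω − c)(a) ≠ 0. (Such a vector is a weight vector of weight −s−2 generating the indecomposable projective module T_s inside L_n ⊗ V_0.) -/

import Mathlib

/-- The tensor product model `M` of `L_n ⊗ V_0`: finitely supported functions on
`{0,…,n} × ℕ`, with standard basis vectors `v_i ⊗ w_k`. -/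
abbrev TM (n : ℕ) : Type := (Fin (n + 1) × ℕ) →₀ ℂ

/-- The basis vector `v_i ⊗ w_k` of `M`, with the convention that it is `0`
whenever `i < 0`, `i > n` or `k < 0`. -/
noncomputable def bv (n : ℕ) (i k : ℤ) : TM n :=
  if h : 0 ≤ i ∧ i < (n : ℤ) + 1 ∧ 0 ≤ k then
    Finsupp.single (⟨i.toNat, by omega⟩, k.toNat) (1 : ℂ)
  else 0

/-- The coefficient of `v_i ⊗ w_k` in `u`, interpreted as `0` for out-of-range
indices. -/
noncomputable def cf (n : ℕ) (u : TM n) (i k : ℤ) : ℂ :=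
  if h : 0 ≤ i ∧ i < (n : ℤ) + 1 ∧ 0 ≤ k then u (⟨i.toNat, by omega⟩, k.toNat) else 0

/-- `F(v_i ⊗ w_k) = (i+1)·v_{i+1} ⊗ w_k + v_i ⊗ w_{k+1}`. -/
noncomputable def FM (n : ℕ) : Module.End ℂ (TM n) :=
  Finsupp.lsum ℂ fun p => LinearMap.toSpanSingleton ℂ (TM n)
    ((((p.1 : ℕ) : ℂ) + 1) • bv n (((p.1 : ℕ) : ℤ) + 1) ((p.2 : ℤ)) +
      bv n ((p.1 : ℕ) : ℤ) ((p.2 : ℤ) + 1))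

/-- `E(v_i ⊗ w_k) = (n-i+1)·v_{i-1} ⊗ w_k - k(k-1)·v_i ⊗ w_{k-1}`. -/
noncomputable def EM (n : ℕ) : Module.End ℂ (TM n) :=
  Finsupp.lsum ℂ fun p => LinearMap.toSpanSingleton ℂ (TM n)
    (((n : ℂ) - ((p.1 : ℕ) : ℂ) + 1) • bv n (((p.1 : ℕ) : ℤ) - 1) ((p.2 : ℤ)) -
      (((p.2 : ℕ) : ℂ) * (((p.2 : ℕ) : ℂ) - 1)) • bv n ((p.1 : ℕ) : ℤ) ((p.2 : ℤ) - 1))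

/-- `H(v_i ⊗ w_k) = (n-2i-2k)·v_i ⊗ w_k`. -/
noncomputable def HM (n : ℕ) : Module.End ℂ (TM n) :=
  Finsupp.lsum ℂ fun p => LinearMap.toSpanSingleton ℂ (TM n)
    (((n : ℂ) - 2 * ((p.1 : ℕ) : ℂ) - 2 * ((p.2 : ℕ) : ℂ)) • bv n ((p.1 : ℕ) : ℤ) ((p.2 : ℤ)))

/-- The Casimir operator `Ω = H² + 2H + 4FE` on `M`. -/
noncomputable def CasM (n : ℕ) : Module.End ℂ (TM n) :=
  HM n * HM n + (2 : ℂ) • HM n + (4 : ℂ) • (FM n * EM n)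

/-!
Put `m = (n + s) / 2` and `e_j = v_j ⊗ w_{m+1-j}`. Every `e_j` has `H`-weight `n - 2m - 2 = -s - 2`,
where `H² + 2H` is the scalar `s(s+2)`, so `Ω - s(s+2)` acts on `∑ c_j e_j` as `4FE`, that is, by a
tridiagonal matrix `N` (`casimirOp`). `N` has a kernel vector `B` (`kernelCoeff`) that is positive
on `0, …, m`, and `(-1)^j / j!` is a left kernel vector of `N`. `B` pairs to zero with this left
kernel vector, because the pairing is an `m`-th finite difference of a polynomial of degree
`n - m - 1 < m`. So `N q = B` has a solution. Adding a large multiple of `B` makes `q` positive, and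
clearing denominators makes it integral. Then `(Ω - s(s+2)) a` is a nonzero multiple of
`∑ B_j e_j`, which `Ω - s(s+2)` kills.
-/

open Finset Polynomial
open scoped Nat

theorem sum_range_neg_one_pow_mul_choose_mul_eval_eq_zero {R : Type*} [CommRing R] {m : ℕ}
    (P : R[X]) (hP : P.natDegree < m) :
    ∑ j ∈ range (m + 1), (-1) ^ j * (m.choose j : R) * P.eval (j : R) = 0 := by
  have h := congrFun (P.fwdDiff_iter_eq_zero_of_degree_lt hP) 0
  rw [fwdDiff_iter_eq_sum_shift, Pi.zero_apply] at h
  rw [← mul_eq_zero_of_right ((-1 : R) ^ m) h, mul_sum]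
  refine sum_congr rfl fun j hj => ?_
  have hjm : j ≤ m := mem_range_succ_iff.mp hj
  rw [zsmul_eq_mul, zero_add, nsmul_one]
  push_cast
  rw [← mul_assoc, ← mul_assoc, ← pow_add, show m + (m - j) = j + 2 * (m - j) by omega, pow_add,
    pow_mul, neg_one_sq, one_pow, mul_one]

theorem descPochhammer_eval_mul_add_one {R : Type*} [CommRing R] (d : ℕ) (y : R) :
    (descPochhammer R d).eval y * (y + 1) = (descPochhammer R d).eval (y + 1) * (y + 1 - d) := by
  rw [← descPochhammer_succ_eval, descPochhammer_succ_left, X_mul, eval_mul_X, eval_comp]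
  simp

theorem exists_pos_nat_forall_mul_eq_natCast {ι : Type*} (s : Finset ι) (r : ι → ℚ)
    (hr : ∀ i ∈ s, 0 ≤ r i) : ∃ d : ℕ, 0 < d ∧ ∃ q : ι → ℕ, ∀ i ∈ s, (q i : ℚ) = d * r i := by
  refine ⟨∏ i ∈ s, (r i).den, prod_pos fun i _ => (r i).den_pos,
    fun i => ((∏ i ∈ s, (r i).den : ℕ) * r i).num.toNat, fun i hi => ?_⟩
  obtain ⟨e, he⟩ := dvd_prod_of_mem (fun i => (r i).den) hi
  have hint : ((∏ i ∈ s, (r i).den : ℕ) : ℚ) * r i = ((e * (r i).num : ℤ) : ℚ) := by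
    rw [he, Int.cast_mul, Int.cast_natCast, ← Rat.mul_den_eq_num]
    push_cast
    ring
  have hnonneg : 0 ≤ e * (r i).num := by
    exact_mod_cast hint ▸ mul_nonneg (Nat.cast_nonneg _) (hr i hi)
  dsimp only
  rw [hint, Rat.num_intCast, ← Int.cast_natCast, Int.toNat_of_nonneg hnonneg]

/-- The matrix of `(Ω - s(s+2)) / 4` on the span of the `e_j = v_j ⊗ w_{m+1-j}`, acting on
coefficient sequences. -/
def casimirOp (n m : ℕ) : (ℕ → ℚ) →ₗ[ℚ] (ℕ → ℚ) where
  toFun c j := (j * (n - j + 1) - (m + 1 - j) * (m - j)) * c j + (n - j) * c (j + 1)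
    - j * (m + 2 - j) * (m + 1 - j) * c (j - 1)
  map_add' c c' := by ext j; simp only [Pi.add_apply]; ring
  map_smul' t c := by ext j; simp only [Pi.smul_apply, smul_eq_mul, RingHom.id_apply]; ring

theorem casimirOp_apply (n m : ℕ) (c : ℕ → ℚ) (j : ℕ) :
    casimirOp n m c j = (j * (n - j + 1) - (m + 1 - j) * (m - j)) * c j + (n - j) * c (j + 1)
      - j * (m + 2 - j) * (m + 1 - j) * c (j - 1) := rfl

noncomputable def kernelCoeff (n m j : ℕ) : ℚ :=
  (descPochhammer ℚ j).eval (m : ℚ) * (descPochhammer ℚ (n - m - 1)).eval ((n : ℚ) - j)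

section Coefficients

variable {n m : ℕ}

theorem casimirOp_apply_congr {c c' : ℕ → ℚ} {k : ℕ} (h : ∀ i ≤ k + 1, c i = c' i) {j : ℕ}
    (hj : j ≤ k) : casimirOp n m c j = casimirOp n m c' j := by
  rw [casimirOp_apply, casimirOp_apply, h j (by omega), h (j + 1) (by omega), h (j - 1) (by omega)]

theorem kernelCoeff_pos (hmn : m < n) {j : ℕ} (hj : j ≤ m) : 0 < kernelCoeff n m j := by
  have hjm : (j : ℚ) ≤ m := by exact_mod_cast hj
  refine mul_pos (descPochhammer_pos (by linarith)) (descPochhammer_pos ?_)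
  rw [Nat.cast_sub (by omega), Nat.cast_sub hmn.le]
  push_cast
  linarith

theorem kernelCoeff_succ_self : kernelCoeff n m (m + 1) = 0 := by
  rw [kernelCoeff, descPochhammer_eval_coe_nat_of_lt (Nat.lt_succ_self m), zero_mul]

theorem sub_mul_kernelCoeff_succ (hmn : m < n) (j : ℕ) :
    ((n : ℚ) - j) * kernelCoeff n m (j + 1)
      = ((m : ℚ) - j) * ((m : ℚ) + 1 - j) * kernelCoeff n m j := by
  have h := descPochhammer_eval_mul_add_one (R := ℚ) (n - m - 1) ((n : ℚ) - (j + 1 : ℕ))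
  rw [show (n : ℚ) - (j + 1 : ℕ) + 1 = n - j by push_cast; ring, Nat.cast_sub (by omega),
    Nat.cast_sub hmn.le] at h
  rw [kernelCoeff, kernelCoeff, descPochhammer_succ_eval]
  linear_combination ((m : ℚ) - j) * (descPochhammer ℚ j).eval (m : ℚ) * h

theorem casimirOp_kernelCoeff (hmn : m < n) : casimirOp n m (kernelCoeff n m) = 0 := by
  ext j
  rw [casimirOp_apply, Pi.zero_apply]
  cases j with
  | zero => linear_combination sub_mul_kernelCoeff_succ hmn 0
  | succ j =>
    have h := sub_mul_kernelCoeff_succ hmn j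
    have h' := sub_mul_kernelCoeff_succ hmn (j + 1)
    simp only [Nat.add_sub_cancel]
    push_cast at h h' ⊢
    linear_combination h' + ((j : ℚ) + 1) * h

/-- Summation by parts against the left kernel vector `(-1)^j / j!` of `casimirOp`. -/
theorem sum_neg_one_pow_div_factorial_mul_casimirOp (c : ℕ → ℚ) :
    ∑ j ∈ range (m + 1), (-1) ^ j / (j ! : ℚ) * casimirOp n m c j
      = (n - m) * ((-1) ^ m / m !) * c (m + 1) := by
  set F : ℕ → ℚ := fun j => j * ((-1) ^ j / j !) *
    ((m + 2 - j) * (m + 1 - j) * c (j - 1) - (n - j + 1) * c j)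
  have hstep : ∀ j, (-1) ^ j / (j ! : ℚ) * casimirOp n m c j = F (j + 1) - F j := by
    intro j
    simp only [F, casimirOp_apply, Nat.add_sub_cancel, Nat.factorial_succ]
    push_cast
    field_simp
    ring
  rw [sum_congr rfl fun j _ => hstep j, sum_range_sub]
  simp only [F, Nat.add_sub_cancel, Nat.factorial_succ]
  push_cast
  field_simp
  ring

/-- The `j`-th term is `(-1)^j C(m, j) P(j)` for `P(x) = (n - x)(n - x - 1)⋯(m + 2 - x)`. -/
theorem sum_neg_one_pow_div_factorial_mul_kernelCoeff (hmn : m < n) (hnm : n ≤ 2 * m) :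
    ∑ j ∈ range (m + 1), (-1) ^ j / (j ! : ℚ) * kernelCoeff n m j = 0 := by
  set P : ℚ[X] := (descPochhammer ℚ (n - m - 1)).comp (C (n : ℚ) - X)
  have hP : P.natDegree < m := by
    calc P.natDegree ≤ (descPochhammer ℚ (n - m - 1)).natDegree * (C (n : ℚ) - X).natDegree :=
          natDegree_comp_le
      _ ≤ (n - m - 1) * 1 := by
          rw [descPochhammer_natDegree]
          exact Nat.mul_le_mul_left _ (by compute_degree)
      _ < m := by omega
  rw [← sum_range_neg_one_pow_mul_choose_mul_eval_eq_zero P hP]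
  refine sum_congr rfl fun j _ => ?_
  rw [kernelCoeff, descPochhammer_eval_eq_descFactorial, Nat.descFactorial_eq_factorial_mul_choose,
    eval_comp]
  simp only [eval_sub, eval_C, eval_X]
  push_cast
  field_simp

/-- Row `j` of `casimirOp c = kernelCoeff` solved for `c (j + 1)`. -/
noncomputable def forwardSolution (n m : ℕ) : ℕ → ℚ
  | 0 => 0
  | j + 1 => (kernelCoeff n m j - (j * (n - j + 1) - (m + 1 - j) * (m - j)) * forwardSolution n m j
      + j * (m + 2 - j) * (m + 1 - j) * forwardSolution n m (j - 1)) / (n - j)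

theorem casimirOp_forwardSolution {j : ℕ} (hj : j < n) :
    casimirOp n m (forwardSolution n m) j = kernelCoeff n m j := by
  have hnj : (n : ℚ) - j ≠ 0 := sub_ne_zero.mpr (by exact_mod_cast hj.ne')
  rw [casimirOp_apply, forwardSolution]
  field_simp
  ring

theorem forwardSolution_succ_self (hmn : m < n) (hnm : n ≤ 2 * m) :
    forwardSolution n m (m + 1) = 0 := by
  have h := sum_neg_one_pow_div_factorial_mul_casimirOp (n := n) (m := m) (forwardSolution n m)
  rw [sum_congr rfl fun j hj => by
      rw [casimirOp_forwardSolution (by have := mem_range_succ_iff.mp hj; omega)],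
    sum_neg_one_pow_div_factorial_mul_kernelCoeff hmn hnm] at h
  have hnm' : (n : ℚ) - m ≠ 0 := sub_ne_zero.mpr (by exact_mod_cast hmn.ne')
  simpa [hnm', Nat.factorial_ne_zero] using h.symm

theorem exists_pos_casimirOp_eq_kernelCoeff (hmn : m < n) (hnm : n ≤ 2 * m) :
    ∃ r : ℕ → ℚ, r (m + 1) = 0 ∧ (∀ j ≤ m, 0 < r j) ∧
      ∀ j ≤ m, casimirOp n m r j = kernelCoeff n m j := by
  have hlarge : ∀ᶠ t : ℚ in Filter.atTop, ∀ j ∈ range (m + 1),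
      0 < forwardSolution n m j + t * kernelCoeff n m j := by
    refine Filter.eventually_all_finset _ |>.mpr fun j hj => ?_
    exact (Filter.tendsto_atTop_add_const_left _ _ <| Filter.tendsto_id.atTop_mul_const
      (kernelCoeff_pos hmn (mem_range_succ_iff.mp hj))).eventually_gt_atTop 0
  obtain ⟨t, ht⟩ := hlarge.exists
  refine ⟨forwardSolution n m + t • kernelCoeff n m, ?_,
    fun j hj => ht j (mem_range_succ_iff.mpr hj), fun j hj => ?_⟩
  · simp [forwardSolution_succ_self hmn hnm, kernelCoeff_succ_self]
  · rw [map_add, map_smul, casimirOp_kernelCoeff hmn, smul_zero, add_zero,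
      casimirOp_forwardSolution (by omega)]

theorem exists_nat_casimirOp_eq_mul_kernelCoeff (hmn : m < n) (hnm : n ≤ 2 * m) :
    ∃ (q : ℕ → ℕ) (d : ℚ), d ≠ 0 ∧ q (m + 1) = 0 ∧ (∀ j ≤ m, 0 < q j) ∧
      ∀ j ≤ m, casimirOp n m (fun i => (q i : ℚ)) j = d * kernelCoeff n m j := by
  obtain ⟨r, hr0, hrpos, hrN⟩ := exists_pos_casimirOp_eq_kernelCoeff hmn hnm
  have hnonneg : ∀ j ∈ range (m + 2), 0 ≤ r j := fun j hj => by
    rcases Nat.lt_or_ge j (m + 1) with h | h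
    · exact (hrpos j (by omega)).le
    · rw [show j = m + 1 by have := mem_range.mp hj; omega, hr0]
  obtain ⟨d, hd, q, hq⟩ := exists_pos_nat_forall_mul_eq_natCast _ r hnonneg
  have hqr : ∀ j ≤ m + 1, (q j : ℚ) = d * r j := fun j hj => hq j (mem_range.mpr (by omega))
  refine ⟨q, d, by positivity, ?_, fun j hj => ?_, fun j hj => ?_⟩
  · have h := hqr (m + 1) le_rfl
    rw [hr0, mul_zero] at h
    exact_mod_cast h
  · exact_mod_cast (hqr j (by omega)).symm ▸ mul_pos (by positivity) (hrpos j hj)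
  · rw [casimirOp_apply_congr (c' := (d : ℚ) • r) hqr hj, map_smul, Pi.smul_apply, hrN j hj,
      smul_eq_mul]

end Coefficients

theorem bv_eq_zero {n : ℕ} {i k : ℤ} (h : ¬(0 ≤ i ∧ i < (n : ℤ) + 1 ∧ 0 ≤ k)) : bv n i k = 0 :=
  dif_neg h

theorem lsum_toSpanSingleton_bv {n : ℕ} (f : Fin (n + 1) × ℕ → TM n) {i k : ℤ} (h1 : 0 ≤ i)
    (h2 : i ≤ n) (h3 : 0 ≤ k) :
    Finsupp.lsum ℂ (fun p => LinearMap.toSpanSingleton ℂ (TM n) (f p)) (bv n i k)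
      = f (⟨i.toNat, by omega⟩, k.toNat) := by
  rw [bv, dif_pos ⟨h1, by omega, h3⟩, Finsupp.lsum_single, LinearMap.toSpanSingleton_apply,
    one_smul]

theorem FM_bv (n : ℕ) (i : ℤ) {k : ℤ} (hk : 0 ≤ k) :
    FM n (bv n i k) = ((i : ℂ) + 1) • bv n (i + 1) k + bv n i (k + 1) := by
  by_cases hi : 0 ≤ i ∧ i ≤ n
  · lift i to ℕ using hi.1
    lift k to ℕ using hk
    rw [FM, lsum_toSpanSingleton_bv _ (by omega) hi.2 (by omega)]
    simp
  · rw [bv_eq_zero (by omega), map_zero, bv_eq_zero (i := i) (by omega)]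
    rcases eq_or_ne i (-1) with rfl | hi'
    · simp
    · rw [bv_eq_zero (by omega), smul_zero, add_zero]

theorem EM_bv (n : ℕ) (i k : ℤ) :
    EM n (bv n i k)
      = ((n : ℂ) - i + 1) • bv n (i - 1) k - ((k : ℂ) * (k - 1)) • bv n i (k - 1) := by
  by_cases hi : 0 ≤ i ∧ i ≤ n ∧ 0 ≤ k
  · lift i to ℕ using hi.1
    lift k to ℕ using hi.2.2
    rw [EM, lsum_toSpanSingleton_bv _ (by omega) hi.2.1 (by omega)]
    simp
  · rw [bv_eq_zero (by omega), map_zero, bv_eq_zero (i := i) (k := k - 1) (by omega)]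
    rcases eq_or_ne i (n + 1) with rfl | hi'
    · simp
    · rw [bv_eq_zero (by omega), smul_zero, smul_zero, sub_zero]

theorem HM_bv (n : ℕ) (i k : ℤ) : HM n (bv n i k) = ((n : ℂ) - 2 * i - 2 * k) • bv n i k := by
  by_cases hi : 0 ≤ i ∧ i ≤ n ∧ 0 ≤ k
  · lift i to ℕ using hi.1
    lift k to ℕ using hi.2.2
    rw [HM, lsum_toSpanSingleton_bv _ (by omega) hi.2.1 (by omega)]
    simp
  · rw [bv_eq_zero (by omega), map_zero, smul_zero]

noncomputable def weightVec (n k : ℕ) (j : ℤ) : TM n := bv n j (k - j)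

/-- `Ω` minus the scalar by which `H² + 2H` acts on the weight space of weight `n - 2k`. -/
noncomputable def casimirShift (n k : ℕ) : Module.End ℂ (TM n) :=
  CasM n - (((n : ℂ) - 2 * k) ^ 2 + 2 * ((n : ℂ) - 2 * k)) • 1

section WeightVectors

variable {n : ℕ}

theorem HM_weightVec (k : ℕ) (j : ℤ) :
    HM n (weightVec n k j) = ((n : ℂ) - 2 * k) • weightVec n k j := by
  rw [weightVec, HM_bv]
  congr 1
  push_cast
  ring

theorem weightVec_neg_one (k : ℕ) : weightVec n k (-1) = 0 := bv_eq_zero (by omega)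

theorem FM_EM_weightVec {k : ℕ} {j : ℤ} (hj : j ≤ k) :
    FM n (EM n (weightVec n k j))
      = ((j : ℂ) * (n - j + 1) - (k - j) * (k - j - 1)) • weightVec n k j
        + ((n : ℂ) - j + 1) • weightVec n k (j - 1)
        - (((k : ℂ) - j) * (k - j - 1) * (j + 1)) • weightVec n k (j + 1) := by
  have hlow : FM n (bv n (j - 1) (k - j)) = (j : ℂ) • weightVec n k j + weightVec n k (j - 1) := by
    rw [FM_bv n _ (by omega), weightVec, weightVec]
    push_cast
    simp only [sub_add_cancel, show (k : ℤ) - j + 1 = k - (j - 1) by ring]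
  have hdiag : (((k - j : ℤ) : ℂ) * ((k - j : ℤ) - 1)) • FM n (bv n j (k - j - 1))
      = (((k : ℂ) - j) * (k - j - 1)) •
          ((j + 1 : ℂ) • weightVec n k (j + 1) + weightVec n k j) := by
    rcases eq_or_lt_of_le hj with rfl | hlt
    · simp
    · rw [FM_bv n _ (by omega), weightVec, weightVec]
      push_cast
      rw [show (k : ℤ) - j - 1 + 1 = k - j by ring, show (k : ℤ) - j - 1 = k - (j + 1) by ring]
  rw [show EM n (weightVec n k j) = _ from EM_bv n j (k - j), map_sub, map_smul, map_smul, hlow,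
    hdiag]
  module

theorem casimirShift_weightVec (k : ℕ) (j : ℤ) :
    casimirShift n k (weightVec n k j) = (4 : ℂ) • FM n (EM n (weightVec n k j)) := by
  simp only [casimirShift, CasM, LinearMap.sub_apply, LinearMap.add_apply, LinearMap.smul_apply,
    Module.End.mul_apply, Module.End.one_apply, HM_weightVec, map_smul]
  module

variable {m : ℕ}

theorem casimirShift_sum_weightVec {c : ℕ → ℚ} (hc : c (m + 1) = 0) :
    casimirShift n (m + 1) (∑ j ∈ range (m + 1), (c j : ℂ) • weightVec n (m + 1) j)
      = ∑ j ∈ range (m + 1), ((4 * casimirOp n m c j : ℚ) : ℂ) • weightVec n (m + 1) j := by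
  set e : ℤ → TM n := weightVec n (m + 1)
  have hterm : ∀ j ∈ range (m + 1),
      casimirShift n (m + 1) ((c j : ℂ) • e j)
      = (4 : ℂ) • (((c j : ℂ) * (j * (n - j + 1) - (m + 1 - j) * (m - j))) • e j
        + ((c j : ℂ) * (n - j + 1)) • e (j - 1)
        - ((c j : ℂ) * ((m + 1 - j) * (m - j) * (j + 1))) • e (j + 1)) := by
    intro j hj
    rw [map_smul, casimirShift_weightVec, FM_EM_weightVec (by have := mem_range.mp hj; omega)]
    push_cast
    module
  have hdown : ∑ j ∈ range (m + 1), ((c j : ℂ) * (n - j + 1)) • e (j - 1)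
      = ∑ j ∈ range (m + 1), ((c (j + 1) : ℂ) * (n - j)) • e j := by
    rw [sum_range_succ', sum_range_succ, hc]
    simp only [CharP.cast_eq_zero, zero_sub, weightVec_neg_one, e, smul_zero, add_zero,
      Rat.cast_zero, zero_mul, zero_smul]
    refine sum_congr rfl fun j _ => ?_
    push_cast
    ring_nf
  have hup : ∑ j ∈ range (m + 1), ((c j : ℂ) * ((m + 1 - j) * (m - j) * (j + 1))) • e (j + 1)
      = ∑ j ∈ range (m + 1), ((c (j - 1) : ℂ) * (j * (m + 2 - j) * (m + 1 - j))) • e j := by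
    rw [sum_range_succ, sum_range_succ']
    simp only [add_sub_cancel_left, sub_self, mul_zero, zero_mul, zero_smul, add_zero,
      add_tsub_cancel_right, Nat.cast_add, Nat.cast_one, add_sub_add_right_eq_sub, zero_tsub,
      CharP.cast_eq_zero, sub_zero]
    refine sum_congr rfl fun j _ => ?_
    ring_nf
  rw [map_sum, sum_congr rfl hterm, ← smul_sum, sum_sub_distrib, sum_add_distrib, hdown, hup,
    ← sum_add_distrib, ← sum_sub_distrib, smul_sum]
  refine sum_congr rfl fun j _ => ?_
  rw [casimirOp_apply]
  push_cast
  module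

theorem sum_smul_weightVec_apply_zero (x : ℕ → ℂ) :
    (∑ j ∈ range (m + 1), x j • weightVec n (m + 1) j) (0, m + 1) = x 0 := by
  rw [Finsupp.finsetSum_apply, sum_eq_single 0 (fun j _ hj => ?_) (by simp)]
  · simp [weightVec, bv, show (0 : ℤ) ≤ m + 1 by omega]
  · unfold weightVec bv
    split_ifs
    · simp [Prod.ext_iff, Fin.ext_iff, hj]
    · simp

theorem casimirShift_sq_sum_weightVec_eq_zero_and_ne_zero (hmn : m < n) {c : ℕ → ℚ} {d : ℚ}
    (hc : c (m + 1) = 0) (hd : d ≠ 0)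
    (hN : ∀ j ≤ m, casimirOp n m c j = d * kernelCoeff n m j) :
    (casimirShift n (m + 1) ^ 2) (∑ j ∈ range (m + 1), (c j : ℂ) • weightVec n (m + 1) j) = 0 ∧
      casimirShift n (m + 1) (∑ j ∈ range (m + 1), (c j : ℂ) • weightVec n (m + 1) j) ≠ 0 := by
  set b : ℕ → ℚ := (4 * d) • kernelCoeff n m
  have hfirst : casimirShift n (m + 1) (∑ j ∈ range (m + 1), (c j : ℂ) • weightVec n (m + 1) j)
      = ∑ j ∈ range (m + 1), (b j : ℂ) • weightVec n (m + 1) j := by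
    rw [casimirShift_sum_weightVec hc]
    refine sum_congr rfl fun j hj => ?_
    rw [hN j (mem_range_succ_iff.mp hj)]
    simp [b, mul_assoc]
  have hb : b (m + 1) = 0 := by simp [b, kernelCoeff_succ_self]
  constructor
  · rw [pow_two, Module.End.mul_apply, hfirst, casimirShift_sum_weightVec hb]
    refine sum_eq_zero fun j _ => ?_
    simp [b, map_smul, casimirOp_kernelCoeff hmn]
  · intro h
    have h0 := congrArg (fun v : TM n => v (0, m + 1)) h
    simp only [hfirst, sum_smul_weightVec_apply_zero, Finsupp.coe_zero, Pi.zero_apply] at h0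
    simp [b, hd, (kernelCoeff_pos hmn (Nat.zero_le m)).ne'] at h0

end WeightVectors

/-- Fix `n ≥ 2` and `0 ≤ s ≤ n-2` with `n - s` even, and `c = s(s+2)`.  There
exist positive integers `q_0, …, q_{(n+s)/2}` such that
`a = Σ_{j=0}^{(n+s)/2} q_j · (v_j ⊗ w_{(n+s+2)/2 - j})` satisfies
`H(a) = (-s-2)·a`, `(Ω - c)²(a) = 0` and `(Ω - c)(a) ≠ 0`; such an `a` is a
weight vector of weight `-s-2` generating `T_s` inside `L_n ⊗ V_0`. -/
theorem stmt15 (n s : ℕ) (hn : 2 ≤ n) (hs : s ≤ n - 2) (hpar : (n - s) % 2 = 0) :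
    ∃ q : ℕ → ℕ, (∀ j ≤ (n + s) / 2, 0 < q j) ∧
      (let a : TM n := ∑ j ∈ Finset.range ((n + s) / 2 + 1),
          ((q j : ℂ)) • bv n (j : ℤ) ((((n + s + 2) / 2 : ℕ) : ℤ) - (j : ℤ));
        HM n a = (-(s : ℂ) - 2) • a ∧
        ((CasM n - ((s : ℂ) * ((s : ℂ) + 2)) • (1 : Module.End ℂ (TM n))) ^ 2) a = 0 ∧
        (CasM n - ((s : ℂ) * ((s : ℂ) + 2)) • (1 : Module.End ℂ (TM n))) a ≠ 0) := by
  set m := (n + s) / 2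
  have hmn : m < n := by omega
  have hnm : n ≤ 2 * m := by omega
  obtain ⟨q, d, hd, hq0, hqpos, hqN⟩ := exists_nat_casimirOp_eq_mul_kernelCoeff hmn hnm
  have hweight : (n : ℂ) - 2 * (m + 1 : ℕ) = -s - 2 := by
    have : ((n + s : ℕ) : ℂ) = (2 * m : ℕ) := by congr 1; omega
    push_cast at this ⊢
    linear_combination this
  have hshift : CasM n - ((s : ℂ) * ((s : ℂ) + 2)) • (1 : Module.End ℂ (TM n))
      = casimirShift n (m + 1) := by
    rw [casimirShift, hweight]
    congr 2
    ring
  refine ⟨q, hqpos, ?_⟩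
  intro a
  have ha : a = ∑ j ∈ range (m + 1), ((q j : ℚ) : ℂ) • weightVec n (m + 1) j := by
    simp [a, weightVec, show (n + s + 2) / 2 = m + 1 by omega]
  rw [hshift, ha]
  refine ⟨?_, casimirShift_sq_sum_weightVec_eq_zero_and_ne_zero hmn (by exact_mod_cast hq0) hd hqN⟩
  rw [map_sum, smul_sum]
  refine sum_congr rfl fun j _ => ?_
  rw [map_smul, HM_weightVec, hweight, smul_comm]
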